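/- (Theorem 1, monotonicity) For every K with 1 ≤ K < N, E[μ̂*_AC,K] ≥ E[μ̂*_AC,K+1], i.e., E[min{μ̂^B_{a_K*}, μ̂*_SE}] ≥ E[min{μ̂^B_{a_{K+1}*}, μ̂*_SE}]; as the number of candidates K decreases, the underestimation of the action candidate based clipped double estimator decays monotonically. -/

import Mathlib

open MeasureTheory ProbabilityTheory Finset

noncomputable section

/-- The (random) set `M_K` of indices whose `B`-value is among the `K` largest values
among `B 1 ω, …, B N ω`: an index belongs to it iff fewer than `K` indices have a
strictly larger `B`-value. -/
def topK {Ω : Type*} {N : ℕ} (B : Fin N → Ω → ℝ) (K : ℕ) (ω : Ω) : Finset (Fin N) :=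
  Finset.univ.filter fun i => (Finset.univ.filter fun j => B i ω < B j ω).card < K

/-- An element of the finite set `s` at which `f` is maximal over `s`. -/
def argmaxOn {α : Type*} [Nonempty α] (f : α → ℝ) (s : Finset α) : α :=
  if h : s.Nonempty then (s.exists_max_image f h).choose else Classical.arbitrary α

/-- `a_K*`: the index of `M_K` at which `i ↦ A i ω` is maximal over `M_K`. -/
def aK {Ω : Type*} {N : ℕ} [NeZero N] (A B : Fin N → Ω → ℝ) (K : ℕ) (ω : Ω) : Fin N :=
  argmaxOn (fun i => A i ω) (topK B K ω)

/-- `a*`: the index at which `i ↦ A i ω` is maximal over all indices. -/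
def aStar {Ω : Type*} {N : ℕ} [NeZero N] (A : Fin N → Ω → ℝ) (ω : Ω) : Fin N :=
  argmaxOn (fun i => A i ω) Finset.univ

/-- The pointwise maximum `max_{1 ≤ i ≤ N} C i ω` (e.g. the single estimator `μ̂*_SE`). -/
def maxOf {Ω : Type*} {N : ℕ} [NeZero N] (C : Fin N → Ω → ℝ) (ω : Ω) : ℝ :=
  Finset.univ.sup' Finset.univ_nonempty fun i => C i ω

/-- `a_(j)`: the index carrying the `j`-th largest value among `B 1 ω, …, B N ω`
(exactly `j - 1` indices have a strictly larger value). -/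
def rankIdx {Ω : Type*} {N : ℕ} [NeZero N] (B : Fin N → Ω → ℝ) (j : ℕ) (ω : Ω) : Fin N :=
  if h : ∃ i, (Finset.univ.filter fun k => B i ω < B k ω).card = j - 1 then h.choose
  else Classical.arbitrary (Fin N)

end

section Helpers

variable {Ω : Type*} {N : ℕ} [NeZero N]

lemma argmaxOn_spec {α : Type*} [Nonempty α] (f : α → ℝ) {s : Finset α} (h : s.Nonempty) :
    argmaxOn f s ∈ s ∧ ∀ b ∈ s, f b ≤ f (argmaxOn f s) := by
  rw [argmaxOn, dif_pos h]
  exact (s.exists_max_image f h).choose_spec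

lemma topK_nonempty (B : Fin N → Ω → ℝ) {K : ℕ} (hK : 1 ≤ K) (ω : Ω) :
    (topK B K ω).Nonempty := by
  obtain ⟨i0, -, hmax⟩ :=
    Finset.exists_max_image Finset.univ (fun i => B i ω) Finset.univ_nonempty
  refine ⟨i0, ?_⟩
  simp only [topK, Finset.mem_filter, Finset.mem_univ, true_and]
  have he : (Finset.univ.filter fun j => B i0 ω < B j ω) = ∅ := by
    ext j; simp [not_lt.2 (hmax j (Finset.mem_univ j))]
  rw [he]
  simp; omega

lemma topK_mono (B : Fin N → Ω → ℝ) (K : ℕ) (ω : Ω) :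
    topK B K ω ⊆ topK B (K + 1) ω := by
  intro i hi
  simp only [topK, Finset.mem_filter, Finset.mem_univ, true_and] at hi ⊢
  omega

/-- The key pointwise inequality: for `ω` at which `A` is injective,
`B (a_{K+1}*) ω ≤ B (a_K*) ω`. -/
lemma key_pointwise (A B : Fin N → Ω → ℝ) {K : ℕ} (hK : 1 ≤ K) (ω : Ω)
    (hA : Function.Injective fun i => A i ω) :
    B (aK A B (K + 1) ω) ω ≤ B (aK A B K ω) ω := by
  obtain ⟨h1m, h1max⟩ := argmaxOn_spec (fun i => A i ω) (topK_nonempty B hK ω)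
  obtain ⟨h2m, h2max⟩ := argmaxOn_spec (fun i => A i ω)
    (topK_nonempty B (le_trans hK (Nat.le_succ K)) ω)
  set a1 := aK A B K ω with ha1
  set a2 := aK A B (K + 1) ω with ha2
  by_contra hcon
  push_neg at hcon
  have ha2not : a2 ∉ topK B K ω := by
    intro hmem
    have hle1 : A a2 ω ≤ A a1 ω := h1max a2 hmem
    have hle2 : A a1 ω ≤ A a2 ω := h2max a1 (topK_mono B K ω h1m)
    have : a1 = a2 := hA (le_antisymm hle2 hle1)
    rw [this] at hcon
    exact lt_irrefl _ hcon
  simp only [topK, Finset.mem_filter, Finset.mem_univ, true_and, not_lt] at ha2not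
  have h1c : (Finset.univ.filter fun j => B a1 ω < B j ω).card < K := by
    have := h1m
    simp only [topK, Finset.mem_filter, Finset.mem_univ, true_and] at this
    exact this
  have hsub : (Finset.univ.filter fun j => B a2 ω < B j ω) ⊆
      (Finset.univ.filter fun j => B a1 ω < B j ω) := by
    intro j hj
    simp only [Finset.mem_filter, Finset.mem_univ, true_and] at hj ⊢
    exact lt_trans hcon hj
  have := Finset.card_le_card hsub
  omega

variable [MeasurableSpace Ω]

lemma measurableSet_topK_mem (B : Fin N → Ω → ℝ) (hB : ∀ i, Measurable (B i))
    (K : ℕ) (i : Fin N) : MeasurableSet {ω | i ∈ topK B K ω} := by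
  have hcard : Measurable fun ω => (Finset.univ.filter fun j => B i ω < B j ω).card := by
    have : (fun ω => (Finset.univ.filter fun j => B i ω < B j ω).card) =
        fun ω => ∑ j : Fin N, if B i ω < B j ω then 1 else 0 := by
      funext ω
      rw [Finset.card_filter]
    rw [this]
    refine Finset.measurable_sum _ fun j _ => ?_
    exact Measurable.ite (measurableSet_lt (hB i) (hB j)) measurable_const measurable_const
  have : {ω | i ∈ topK B K ω} =
      (fun ω => (Finset.univ.filter fun j => B i ω < B j ω).card) ⁻¹' {n | n < K} := by
    ext ω
    simp only [topK, Set.mem_setOf_eq, Finset.mem_filter, Finset.mem_univ, true_and,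
      Set.mem_preimage]
  rw [this]
  exact hcard (by measurability)

/-- The measurable “witness set” for `aK = i`. -/
def aKSet (A B : Fin N → Ω → ℝ) (K : ℕ) (i : Fin N) : Set Ω :=
  {ω | i ∈ topK B K ω ∧ ∀ j ∈ topK B K ω, A j ω ≤ A i ω}

lemma measurableSet_aKSet (A B : Fin N → Ω → ℝ) (hA : ∀ i, Measurable (A i))
    (hB : ∀ i, Measurable (B i)) (K : ℕ) (i : Fin N) :
    MeasurableSet (aKSet A B K i) := by
  have : aKSet A B K i = {ω | i ∈ topK B K ω} ∩
      ⋂ j : Fin N, ({ω | j ∈ topK B K ω}ᶜ ∪ {ω | A j ω ≤ A i ω}) := by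
    ext ω
    simp only [aKSet, Set.mem_setOf_eq, Set.mem_inter_iff, Set.mem_iInter, Set.mem_union,
      Set.mem_compl_iff]
    constructor
    · rintro ⟨h1, h2⟩
      refine ⟨h1, fun j => ?_⟩
      by_cases hj : j ∈ topK B K ω
      · exact Or.inr (h2 j hj)
      · exact Or.inl hj
    · rintro ⟨h1, h2⟩
      refine ⟨h1, fun j hj => ?_⟩
      rcases h2 j with h | h
      · exact absurd hj h
      · exact h
  rw [this]
  exact (measurableSet_topK_mem B hB K i).inter
    (MeasurableSet.iInter fun j =>
      ((measurableSet_topK_mem B hB K j).compl.union (measurableSet_le (hA j) (hA i))))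

lemma aKSet_iff (A B : Fin N → Ω → ℝ) {K : ℕ} (hK : 1 ≤ K) (ω : Ω)
    (hA : Function.Injective fun i => A i ω) (i : Fin N) :
    ω ∈ aKSet A B K i ↔ i = aK A B K ω := by
  obtain ⟨hm, hmax⟩ := argmaxOn_spec (fun i => A i ω) (topK_nonempty B hK ω)
  constructor
  · rintro ⟨h1, h2⟩
    have hle1 : A i ω ≤ A (aK A B K ω) ω := hmax i h1
    have hle2 : A (aK A B K ω) ω ≤ A i ω := h2 _ hm
    exact hA (le_antisymm hle1 hle2)
  · rintro rfl
    exact ⟨hm, hmax⟩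

/-- A measurable version of `ω ↦ B (aK A B K ω) ω`. -/
noncomputable def aKVal (A B : Fin N → Ω → ℝ) (K : ℕ) (ω : Ω) : ℝ :=
  ∑ i : Fin N, (aKSet A B K i).indicator (B i) ω

lemma measurable_aKVal (A B : Fin N → Ω → ℝ) (hA : ∀ i, Measurable (A i))
    (hB : ∀ i, Measurable (B i)) (K : ℕ) : Measurable (aKVal A B K) := by
  refine Finset.measurable_sum _ fun i _ => ?_
  exact (hB i).indicator (measurableSet_aKSet A B hA hB K i)

lemma aKVal_eq (A B : Fin N → Ω → ℝ) {K : ℕ} (hK : 1 ≤ K) (ω : Ω)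
    (hA : Function.Injective fun i => A i ω) :
    aKVal A B K ω = B (aK A B K ω) ω := by
  rw [aKVal]
  rw [Finset.sum_eq_single_of_mem (aK A B K ω) (Finset.mem_univ _)]
  · rw [Set.indicator_of_mem ((aKSet_iff A B hK ω hA _).2 rfl)]
  · intro j _ hj
    rw [Set.indicator_of_notMem]
    intro hmem
    exact hj ((aKSet_iff A B hK ω hA j).1 hmem)

lemma measurable_maxOf (C : Fin N → Ω → ℝ) (hC : ∀ i, Measurable (C i)) :
    Measurable (maxOf C) := by
  have h : Measurable (Finset.univ.sup' (Finset.univ_nonempty (α := Fin N)) C) :=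
    Finset.measurable_sup' _ fun i _ => hC i
  convert h using 1
  funext ω
  rw [maxOf, Finset.sup'_apply]

end Helpers

theorem stmt5 {Ω : Type*} [MeasurableSpace Ω] (P : MeasureTheory.Measure Ω)
    [MeasureTheory.IsProbabilityMeasure P]
    (N : ℕ) [NeZero N] (hN : 2 ≤ N)
    (A B C : Fin N → Ω → ℝ)
    (hAmeas : ∀ i, Measurable (A i)) (hBmeas : ∀ i, Measurable (B i))
    (hCmeas : ∀ i, Measurable (C i))
    (hAint : ∀ i, MeasureTheory.Integrable (A i) P)
    (hBint : ∀ i, MeasureTheory.Integrable (B i) P)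
    (hCint : ∀ i, MeasureTheory.Integrable (C i) P)
    (hAdist : ∀ᵐ ω ∂P, Function.Injective fun i => A i ω)
    (hBdist : ∀ᵐ ω ∂P, Function.Injective fun i => B i ω)
    :
    ∀ K, 1 ≤ K → K < N →
      ∫ ω, min (B (aK A B (K + 1) ω) ω) (maxOf C ω) ∂P ≤
        ∫ ω, min (B (aK A B K ω) ω) (maxOf C ω) ∂P := by
  intro K hK1 hKN
  -- a dominating integrable function
  set g : Ω → ℝ := fun ω => (∑ i : Fin N, |B i ω|) + ∑ i : Fin N, |C i ω| with hg
  have hgint : MeasureTheory.Integrable g P :=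
    (MeasureTheory.integrable_finset_sum _ fun i _ => (hBint i).abs).add
      (MeasureTheory.integrable_finset_sum _ fun i _ => (hCint i).abs)
  have habsmin : ∀ a b : ℝ, |min a b| ≤ |a| + |b| := by
    intro a b
    rcases le_total a b with h | h
    · rw [min_eq_left h]; linarith [abs_nonneg b]
    · rw [min_eq_right h]; linarith [abs_nonneg a]
  have hmaxbound : ∀ ω, |maxOf C ω| ≤ ∑ i : Fin N, |C i ω| := by
    intro ω
    obtain ⟨i0, -, hi0⟩ := Finset.exists_mem_eq_sup' (Finset.univ_nonempty (α := Fin N))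
      (fun i => C i ω)
    rw [maxOf, hi0]
    exact Finset.single_le_sum (f := fun i => |C i ω|) (fun i _ => abs_nonneg _)
      (Finset.mem_univ i0)
  have hint : ∀ L : ℕ, 1 ≤ L →
      MeasureTheory.Integrable (fun ω => min (B (aK A B L ω) ω) (maxOf C ω)) P := by
    intro L hL
    have hmeas : Measurable fun ω => min (aKVal A B L ω) (maxOf C ω) :=
      (measurable_aKVal A B hAmeas hBmeas L).min (measurable_maxOf C hCmeas)
    have haesm : MeasureTheory.AEStronglyMeasurable
        (fun ω => min (B (aK A B L ω) ω) (maxOf C ω)) P := by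
      refine hmeas.aestronglyMeasurable.congr ?_
      filter_upwards [hAdist] with ω hA
      rw [aKVal_eq A B hL ω hA]
    refine MeasureTheory.Integrable.mono' hgint haesm (Filter.Eventually.of_forall fun ω => ?_)
    calc |min (B (aK A B L ω) ω) (maxOf C ω)| ≤ |B (aK A B L ω) ω| + |maxOf C ω| :=
          habsmin _ _
      _ ≤ (∑ i : Fin N, |B i ω|) + ∑ i : Fin N, |C i ω| :=
          add_le_add
            (Finset.single_le_sum (f := fun i => |B i ω|) (fun i _ => abs_nonneg _)
              (Finset.mem_univ _))
            (hmaxbound ω)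
  refine MeasureTheory.integral_mono_ae (hint (K + 1) (by omega)) (hint K hK1) ?_
  filter_upwards [hAdist] with ω hA
  exact min_le_min (key_pointwise A B hK1 ω hA) le_rfl
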